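/- For every δ > 0 and σ > 0, the function ϕ(x) = Φ((x - δ)/σ) / Φ(x/σ) is strictly increasing on ℝ, where Φ is the standard normal CDF. -/

import Mathlib

/-- Standard normal PDF. -/
noncomputable def stdPdf (x : ℝ) : ℝ := Real.exp (-(x ^ 2) / 2) / Real.sqrt (2 * Real.pi)

/-- Standard normal CDF. -/
noncomputable def stdCdf (x : ℝ) : ℝ := ∫ t in Set.Iic x, stdPdf t

/-!
Writing `φ` for the density, `(φ/Φ)' = -φ (xΦ + φ)/Φ²`, and `xΦ(x) + φ(x) = ∫_{t ≤ x} (x - t) φ(t) dt`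
(integrate `-tφ(t) = φ'(t)`), which is positive. Hence `Φ'/Φ` is strictly decreasing, i.e. `Φ` is
strictly log-concave, and then the derivative of `Φ(y - δ)/Φ(y)` is `Φ(y - δ)/Φ(y)` times
`Φ'(y - δ)/Φ(y - δ) - Φ'(y)/Φ(y) > 0`. The scale `σ` only reparametrizes `y = x/σ`.
-/

open MeasureTheory Real Set Filter Function

lemma strictMono_div_comp_sub {f f' : ℝ → ℝ} (hf : ∀ x, HasDerivAt f (f' x) x)
    (hf_pos : ∀ x, 0 < f x) (hlogderiv : StrictAnti fun x => f' x / f x) {δ : ℝ} (hδ : 0 < δ) :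
    StrictMono fun x => f (x - δ) / f x := by
  refine strictMono_of_hasDerivAt_pos
    (f' := fun x => f (x - δ) / f x * (f' (x - δ) / f (x - δ) - f' x / f x)) (fun x => ?_)
    (fun x => mul_pos (div_pos (hf_pos _) (hf_pos _))
      (sub_pos.2 (hlogderiv (sub_lt_self x hδ))))
  have hshift : HasDerivAt (fun y => f (y - δ)) (f' (x - δ)) x := (hf (x - δ)).comp_sub_const x δ
  refine (hshift.div (hf x) (hf_pos x).ne').congr_deriv ?_
  have := (hf_pos (x - δ)).ne'
  have := (hf_pos x).ne'
  field_simp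

lemma setIntegral_Iic_pos {g : ℝ → ℝ} {x : ℝ} (hg : IntegrableOn g (Iic x))
    (hpos : ∀ t < x, 0 < g t) : 0 < ∫ t in Iic x, g t := by
  rw [integral_Iic_eq_integral_Iio,
    setIntegral_pos_iff_support_of_nonneg_ae _ (hg.mono_set Iio_subset_Iic_self)]
  · rw [(inter_eq_right.2 fun t ht => (hpos t ht).ne' : support g ∩ Iio x = Iio x)]
    simp
  · filter_upwards [ae_restrict_mem measurableSet_Iio] with t ht using (hpos t ht).le

lemma stdPdf_pos (x : ℝ) : 0 < stdPdf x := by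
  unfold stdPdf
  positivity

lemma continuous_stdPdf : Continuous stdPdf := by
  unfold stdPdf
  fun_prop

lemma stdPdf_eq_exp_neg_mul_sq (x : ℝ) :
    stdPdf x = exp (-(1 / 2) * x ^ 2) / √(2 * π) := by
  unfold stdPdf
  ring_nf

lemma integrable_stdPdf : Integrable stdPdf :=
  ((integrable_exp_neg_mul_sq (by norm_num : (0 : ℝ) < 1 / 2)).div_const _).congr
    (.of_forall fun x => (stdPdf_eq_exp_neg_mul_sq x).symm)

lemma integrable_mul_stdPdf : Integrable fun x => x * stdPdf x :=
  ((integrable_mul_exp_neg_mul_sq (by norm_num : (0 : ℝ) < 1 / 2)).div_const _).congr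
    (.of_forall fun x => by dsimp only; rw [stdPdf_eq_exp_neg_mul_sq, mul_div_assoc])

lemma hasDerivAt_stdPdf (x : ℝ) : HasDerivAt stdPdf (-x * stdPdf x) x := by
  have hexp : HasDerivAt (fun y : ℝ => -(y ^ 2) / 2) (-x) x := by
    exact ((hasDerivAt_pow 2 x).neg.div_const 2).congr_deriv (by push_cast; ring)
  refine (hexp.exp.div_const _).congr_deriv ?_
  unfold stdPdf
  ring

lemma tendsto_stdPdf_atBot : Tendsto stdPdf atBot (nhds 0) := by
  have hsq : Tendsto (fun x : ℝ => -(x ^ 2) / 2) atBot atBot :=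
    ((tendsto_neg_atTop_atBot.comp ((tendsto_pow_atTop two_ne_zero).comp
      tendsto_neg_atBot_atTop)).atBot_div_const two_pos).congr fun x => by simp
  have h := (tendsto_exp_atBot.comp hsq).div_const (√(2 * π))
  rwa [zero_div] at h

lemma stdCdf_pos (x : ℝ) : 0 < stdCdf x :=
  setIntegral_Iic_pos integrable_stdPdf.integrableOn fun t _ => stdPdf_pos t

lemma hasDerivAt_stdCdf (x : ℝ) : HasDerivAt stdCdf (stdPdf x) x := by
  have hcdf : ∀ y, stdCdf y = stdCdf 0 + ∫ t in (0 : ℝ)..y, stdPdf t := fun y => by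
    rw [← intervalIntegral.integral_Iic_sub_Iic integrable_stdPdf.integrableOn
      integrable_stdPdf.integrableOn, stdCdf, stdCdf, add_sub_cancel]
  refine (HasDerivAt.const_add _ ?_).congr_of_eventuallyEq (.of_forall hcdf)
  exact intervalIntegral.integral_hasDerivAt_right integrable_stdPdf.intervalIntegrable
    (continuous_stdPdf.stronglyMeasurableAtFilter _ _) continuous_stdPdf.continuousAt

lemma setIntegral_Iic_mul_stdPdf (x : ℝ) : ∫ t in Iic x, t * stdPdf t = -stdPdf x := by
  simpa using integral_Iic_of_hasDerivAt_of_tendsto' (a := x) (m := 0)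
    (f := fun t => -stdPdf t)
    (fun t _ => (hasDerivAt_stdPdf t).neg.congr_deriv (by ring))
    integrable_mul_stdPdf.integrableOn (by simpa using tendsto_stdPdf_atBot.neg)

lemma setIntegral_Iic_sub_mul_stdPdf (x : ℝ) :
    ∫ t in Iic x, (x - t) * stdPdf t = x * stdCdf x + stdPdf x := by
  simp_rw [sub_mul]
  rw [integral_sub (integrable_stdPdf.const_mul x).integrableOn integrable_mul_stdPdf.integrableOn,
    integral_const_mul, setIntegral_Iic_mul_stdPdf, stdCdf, sub_neg_eq_add]

lemma mul_stdCdf_add_stdPdf_pos (x : ℝ) : 0 < x * stdCdf x + stdPdf x := by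
  rw [← setIntegral_Iic_sub_mul_stdPdf]
  refine setIntegral_Iic_pos ?_ fun t ht => mul_pos (sub_pos.2 ht) (stdPdf_pos t)
  simp_rw [sub_mul]
  exact (integrable_stdPdf.const_mul x).integrableOn.sub integrable_mul_stdPdf.integrableOn

lemma strictAnti_stdPdf_div_stdCdf : StrictAnti fun x => stdPdf x / stdCdf x := by
  refine strictAnti_of_hasDerivAt_neg
    (f' := fun x => -(stdPdf x * (x * stdCdf x + stdPdf x) / stdCdf x ^ 2)) (fun x => ?_)
    (fun x => neg_neg_of_pos (div_pos (mul_pos (stdPdf_pos x) (mul_stdCdf_add_stdPdf_pos x))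
      (pow_pos (stdCdf_pos x) 2)))
  exact ((hasDerivAt_stdPdf x).div (hasDerivAt_stdCdf x) (stdCdf_pos x).ne').congr_deriv
    (by ring)

/-- For δ > 0 and σ > 0, x ↦ Φ((x-δ)/σ)/Φ(x/σ) is strictly increasing. -/
theorem cdf_ratio_strictMono (δ σ : ℝ) (hδ : 0 < δ) (hσ : 0 < σ) :
    StrictMono (fun x : ℝ => stdCdf ((x - δ) / σ) / stdCdf (x / σ)) := by
  have hratio : StrictMono fun y => stdCdf (y - δ / σ) / stdCdf y :=
    strictMono_div_comp_sub hasDerivAt_stdCdf stdCdf_pos strictAnti_stdPdf_div_stdCdf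
      (div_pos hδ hσ)
  have hscale : StrictMono fun x : ℝ => x / σ := fun a b hab => div_lt_div_of_pos_right hab hσ
  simpa only [comp_def, sub_div] using hratio.comp hscale
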